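/- Let $M$ be a binary $k$-HST with $k > 1$, and let $S \subseteq M$ with $|S| \ge 3$. Then any bijection of $S$ onto an equilateral metric space has distortion at least $k$; i.e., there exist three points $x, y, z \in S$ such that the ratio of the largest to the smallest of the three pairwise distances among $x, y, z$ is at least $k$. -/
import Mathlib


/-- Longest common prefix of two binary paths (= least common ancestor of leaves of a
binary tree encoded as lists of booleans). -/
def lcp : List Bool → List Bool → List Bool
  | a :: as, b :: bs => if a = b then a :: lcp as bs else []
  | _, _ => []

lemma lcp_prefix_left : ∀ a b : List Bool, lcp a b <+: a
  | [], _ => by simp [lcp]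
  | _ :: _, [] => by simp [lcp]
  | a :: as, b :: bs => by
    by_cases h : a = b
    · simp only [lcp, if_pos h]
      exact List.cons_prefix_cons.mpr ⟨rfl, lcp_prefix_left as bs⟩
    · simp [lcp, h]

lemma key : ∀ x y z : List Bool,
    ¬ x <+: y → ¬ y <+: x → ¬ x <+: z → ¬ z <+: x → ¬ y <+: z → ¬ z <+: y →
    ∃ b : Bool,
      (lcp x z = lcp y z ∧ (lcp y z) ++ [b] <+: lcp x y) ∨
      (lcp x y = lcp y z ∧ (lcp y z) ++ [b] <+: lcp x z) ∨
      (lcp x y = lcp x z ∧ (lcp x z) ++ [b] <+: lcp y z)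
  | [], _, _, h, _, _, _, _, _ => absurd (List.nil_prefix) h
  | _ :: _, [], _, _, h, _, _, _, _ => absurd (List.nil_prefix) h
  | _ :: _, _ :: _, [], _, _, _, h, _, _ => absurd (List.nil_prefix) h
  | a :: xs, b :: ys, c :: zs, h1, h2, h3, h4, h5, h6 => by
    by_cases hab : a = b
    · by_cases hac : a = c
      · subst hab; subst hac
        have lift : ∀ u v : List Bool, ¬ a :: u <+: a :: v → ¬ u <+: v := by
          intro u v h hp
          exact h (List.cons_prefix_cons.mpr ⟨rfl, hp⟩)
        obtain ⟨b', H⟩ := key xs ys zs (lift _ _ h1) (lift _ _ h2) (lift _ _ h3)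
          (lift _ _ h4) (lift _ _ h5) (lift _ _ h6)
        refine ⟨b', ?_⟩
        simp only [lcp, if_pos rfl]
        rcases H with ⟨he, hp⟩ | ⟨he, hp⟩ | ⟨he, hp⟩
        · exact Or.inl ⟨by rw [he], List.cons_prefix_cons.mpr ⟨rfl, hp⟩⟩
        · exact Or.inr (Or.inl ⟨by rw [he], List.cons_prefix_cons.mpr ⟨rfl, hp⟩⟩)
        · exact Or.inr (Or.inr ⟨by rw [he], List.cons_prefix_cons.mpr ⟨rfl, hp⟩⟩)
      · -- a = b ≠ c
        subst hab
        refine ⟨a, Or.inl ⟨by simp [lcp, hac], ?_⟩⟩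
        have e1 : lcp (a::ys) (c::zs) = [] := by simp [lcp, hac]
        have e2 : lcp (a::xs) (a::ys) = a :: lcp xs ys := by simp [lcp]
        rw [e1, e2]
        exact ⟨lcp xs ys, rfl⟩
    · by_cases hac : a = c
      · -- a = c ≠ b
        subst hac
        have hba : ¬ b = a := fun h => hab h.symm
        refine ⟨a, Or.inr (Or.inl ⟨by simp [lcp, hab, hba], ?_⟩)⟩
        have e1 : lcp (b::ys) (a::zs) = [] := by simp [lcp, hba]
        have e2 : lcp (a::xs) (a::zs) = a :: lcp xs zs := by simp [lcp]
        rw [e1, e2]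
        exact ⟨lcp xs zs, rfl⟩
      · -- b = c ≠ a
        have hbc : b = c := by revert hab hac; cases a <;> cases b <;> cases c <;> simp
        subst hbc
        refine ⟨b, Or.inr (Or.inr ⟨by simp [lcp, hab, hac], ?_⟩)⟩
        have e1 : lcp (a::xs) (b::zs) = [] := by simp [lcp, hab]
        have e2 : lcp (b::ys) (b::zs) = b :: lcp ys zs := by simp [lcp]
        rw [e1, e2]
        exact ⟨lcp ys zs, rfl⟩

/-- in a binary `k`-HST `M` (`k > 1`), encoded as a prefix-closed finite
set of binary paths with labels `Δ` and metric `d(x,y) = Δ(lca(x,y))` on the leaves,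
every subset `S` of (the leaves of) `M` with `|S| ≥ 3` contains three distinct points
`x, y, z` such that the ratio of the largest to the smallest of the three pairwise
distances is at least `k`; hence any bijection of `S` with an equilateral space has
distortion at least `k`. -/
theorem stmt_8 (k : ℝ) (hk : 1 < k)
    (T : Finset (List Bool)) (hroot : [] ∈ T)
    (hpref : ∀ v ∈ T, ∀ u : List Bool, u <+: v → u ∈ T)
    (Δ : List Bool → ℝ)
    (hΔpos : ∀ v ∈ T, 0 ≤ Δ v)
    (hΔ0 : ∀ v ∈ T, (Δ v = 0 ↔ ∀ i : Bool, v ++ [i] ∉ T))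
    (hHST : ∀ v ∈ T, ∀ i : Bool, v ++ [i] ∈ T → Δ (v ++ [i]) ≤ Δ v / k)
    (S : Finset (List Bool)) (hS : ∀ v ∈ S, v ∈ T ∧ ∀ i : Bool, v ++ [i] ∉ T)
    (hScard : 3 ≤ S.card) :
    ∃ x ∈ S, ∃ y ∈ S, ∃ z ∈ S, x ≠ y ∧ x ≠ z ∧ y ≠ z ∧
      k * min (min (Δ (lcp x y)) (Δ (lcp x z))) (Δ (lcp y z)) ≤
        max (max (Δ (lcp x y)) (Δ (lcp x z))) (Δ (lcp y z)) := by
  have hk0 : (0:ℝ) < k := lt_trans one_pos hk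
  -- extract three distinct elements
  have hS0 : 0 < S.card := by omega
  obtain ⟨x, hxS⟩ := Finset.card_pos.mp hS0
  have h2 : 0 < (S.erase x).card := by
    rw [Finset.card_erase_of_mem hxS]; omega
  obtain ⟨y, hyE⟩ := Finset.card_pos.mp h2
  have hyS : y ∈ S := Finset.mem_of_mem_erase hyE
  have hyx : y ≠ x := Finset.ne_of_mem_erase hyE
  have h3 : 0 < ((S.erase x).erase y).card := by
    rw [Finset.card_erase_of_mem hyE, Finset.card_erase_of_mem hxS]; omega
  obtain ⟨z, hzE⟩ := Finset.card_pos.mp h3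
  have hzy : z ≠ y := Finset.ne_of_mem_erase hzE
  have hzx : z ≠ x := Finset.ne_of_mem_erase (Finset.mem_of_mem_erase hzE)
  have hzS : z ∈ S := Finset.mem_of_mem_erase (Finset.mem_of_mem_erase hzE)
  -- leaves are pairwise incomparable
  have incomp : ∀ u ∈ S, ∀ v ∈ S, u ≠ v → ¬ u <+: v := by
    intro u hu v hv huv ⟨t, ht⟩
    match t with
    | [] => exact huv (by simpa using ht)
    | i :: rest =>
      have : u ++ [i] ∈ T := hpref v (hS v hv).1 (u ++ [i]) ⟨rest, by simpa using ht⟩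
      exact (hS u hu).2 i this
  -- monotonicity of Δ along prefixes
  have mono : ∀ s u : List Bool, u ++ s ∈ T → Δ (u ++ s) ≤ Δ u := by
    intro s
    induction s with
    | nil => intro u _; simp
    | cons i s ih =>
      intro u hu
      have hm : (u ++ [i]) ++ s ∈ T := by simpa using hu
      have h1 : Δ ((u ++ [i]) ++ s) ≤ Δ (u ++ [i]) := ih (u ++ [i]) hm
      have h2 : u ++ [i] ∈ T := hpref _ hm _ ⟨s, rfl⟩
      have h3 : u ∈ T := hpref _ h2 _ ⟨[i], rfl⟩
      have h4 : Δ (u ++ [i]) ≤ Δ u / k := hHST u h3 i h2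
      have h5 : Δ u / k ≤ Δ u := by
        have := hΔpos u h3
        rw [div_le_iff₀ hk0]; nlinarith
      calc Δ (u ++ i :: s) = Δ ((u ++ [i]) ++ s) := by simp
        _ ≤ Δ (u ++ [i]) := h1
        _ ≤ Δ u := le_trans h4 h5
  -- key combinatorial fact
  obtain ⟨b, H⟩ := key x y z (incomp x hxS y hyS (Ne.symm hyx)) (incomp y hyS x hxS hyx)
    (incomp x hxS z hzS (Ne.symm hzx)) (incomp z hzS x hxS hzx)
    (incomp y hyS z hzS (Ne.symm hzy)) (incomp z hzS y hyS hzy)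
  -- general step: if w ++ [b] <+: v and v <+: (a leaf in T), then k * Δ v ≤ Δ w
  have step : ∀ w v e : List Bool, e ∈ T → v <+: e → w ++ [b] <+: v → k * Δ v ≤ Δ w := by
    intro w v e heT hve hwv
    have hvT : v ∈ T := hpref e heT v hve
    obtain ⟨s, hs⟩ := hwv
    have hwbT : w ++ [b] ∈ T := hpref v hvT _ ⟨s, hs⟩
    have hwT : w ∈ T := hpref _ hwbT _ ⟨[b], rfl⟩
    have h1 : Δ v ≤ Δ (w ++ [b]) := by
      rw [← hs] at hvT ⊢
      exact mono s (w ++ [b]) hvT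
    have h2 : Δ (w ++ [b]) ≤ Δ w / k := hHST w hwT b hwbT
    have h3 : Δ v ≤ Δ w / k := le_trans h1 h2
    rw [le_div_iff₀ hk0] at h3
    linarith [h3]
  refine ⟨x, hxS, y, hyS, z, hzS, Ne.symm hyx, Ne.symm hzx, Ne.symm hzy, ?_⟩
  set p := Δ (lcp x y) with hp
  set q := Δ (lcp x z) with hq
  set r := Δ (lcp y z) with hr
  have hxT : x ∈ T := (hS x hxS).1
  have hyT : y ∈ T := (hS y hyS).1
  rcases H with ⟨he, hpr⟩ | ⟨he, hpr⟩ | ⟨he, hpr⟩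
  · -- lcp x z = lcp y z, deep pair is (x,y): k * p ≤ r
    have hkp : k * p ≤ r := step (lcp y z) (lcp x y) x hxT (lcp_prefix_left x y) hpr
    have hmin : min (min p q) r ≤ p := le_trans (min_le_left _ _) (min_le_left _ _)
    have hmax : r ≤ max (max p q) r := le_max_right _ _
    calc k * min (min p q) r ≤ k * p := by nlinarith
      _ ≤ r := hkp
      _ ≤ max (max p q) r := hmax
  · -- lcp x y = lcp y z, deep pair is (x,z): k * q ≤ r
    have hkq : k * q ≤ r := step (lcp y z) (lcp x z) x hxT (lcp_prefix_left x z) hpr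
    have hmin : min (min p q) r ≤ q := le_trans (min_le_left _ _) (min_le_right _ _)
    have hmax : r ≤ max (max p q) r := le_max_right _ _
    calc k * min (min p q) r ≤ k * q := by nlinarith
      _ ≤ r := hkq
      _ ≤ max (max p q) r := hmax
  · -- lcp x y = lcp x z, deep pair is (y,z): k * r ≤ q
    have hkr : k * r ≤ q := step (lcp x z) (lcp y z) y hyT (lcp_prefix_left y z) hpr
    have hmin : min (min p q) r ≤ r := min_le_right _ _
    have hmax : q ≤ max (max p q) r := le_trans (le_max_right _ _) (le_max_left _ _)
    calc k * min (min p q) r ≤ k * r := by nlinarith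
      _ ≤ q := hkr
      _ ≤ max (max p q) r := hmax
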